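/- Let H and H' be complex Hilbert spaces equipped with orthogonal decompositions (H_ℓ)_{ℓ∈L} of H and (H'_{ℓ'})_{ℓ'∈L'} of H' (mutually orthogonal closed subspaces with dense algebraic span), with orthogonal projections P_ℓ and P'_{ℓ'}. Let B : H → H' be a bounded operator, R ∈ ℕ and c ≥ 0, and assume: ‖P'_{ℓ'} ∘ B ∘ P_ℓ‖ ≤ c for all ℓ ∈ L and ℓ' ∈ L'; for every ℓ ∈ L the set {ℓ' ∈ L' : P'_{ℓ'} ∘ B ∘ P_ℓ ≠ 0} has at most R elements; and for every ℓ' ∈ L' the set {ℓ ∈ L : P'_{ℓ'} ∘ B ∘ P_ℓ ≠ 0} has at most R elements. Then ‖B‖ ≤ R·c. -/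

import Mathlib

/-- An orthogonal decomposition of a complex Hilbert space indexed by `I`, presented by the
family of orthogonal projections onto its members: a family of mutually orthogonal
self-adjoint idempotents whose ranges have dense algebraic span. -/
structure OrthogonalDecomposition {I H : Type*} [NormedAddCommGroup H]
    [InnerProductSpace ℂ H] [CompleteSpace H] (P : I → (H →L[ℂ] H)) : Prop where
  isSelfAdjoint : ∀ i, IsSelfAdjoint (P i)
  idempotent : ∀ i, (P i).comp (P i) = P i
  orthogonal : ∀ i j, i ≠ j → (P i).comp (P j) = 0
  denseSpan : Dense (((⨆ i, LinearMap.range (P i : H →ₗ[ℂ] H)) : Submodule ℂ H) : Set H)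

/-!
For `x`, `y` in the algebraic spans, `x = ∑ ℓ P ℓ x` and `y = ∑ ℓ' P' ℓ' y` are finite orthogonal
sums, so `⟪y, B x⟫` is a finite sum over the block support of terms bounded by
`c ‖P ℓ x‖ ‖P' ℓ' y‖`. Schur's test (Cauchy–Schwarz over the support, each row and column
contributing at most `R` terms) and Pythagoras bound it by `R c ‖x‖ ‖y‖`; density of the spans
extends this to all `x`, `y`, which bounds `‖B‖`.
-/

open scoped InnerProductSpace
open Finset

namespace Finset

variable {ι κ : Type*} (s : Finset ι) (t : Finset κ) (r : ι → κ → Prop) [DecidableRel r] {R : ℕ}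

theorem sum_filter_product_fst_le (hrow : ∀ i ∈ s, #{j ∈ t | r i j} ≤ R) {f : ι → ℝ}
    (hf : ∀ i ∈ s, 0 ≤ f i) : ∑ p ∈ s ×ˢ t with r p.1 p.2, f p.1 ≤ R * ∑ i ∈ s, f i := by
  rw [sum_finset_product _ s (fun i => {j ∈ t | r i j}) (by simp [and_assoc]), mul_sum]
  refine sum_le_sum fun i hi => ?_
  simp only [sum_const, nsmul_eq_mul]
  exact mul_le_mul_of_nonneg_right (mod_cast hrow i hi) (hf i hi)

theorem sum_filter_product_snd_le (hcol : ∀ j ∈ t, #{i ∈ s | r i j} ≤ R) {g : κ → ℝ}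
    (hg : ∀ j ∈ t, 0 ≤ g j) : ∑ p ∈ s ×ˢ t with r p.1 p.2, g p.2 ≤ R * ∑ j ∈ t, g j := by
  rw [sum_finset_product_right _ t (fun j => {i ∈ s | r i j})
    (by simp [and_assoc, and_left_comm]), mul_sum]
  refine sum_le_sum fun j hj => ?_
  simp only [sum_const, nsmul_eq_mul]
  exact mul_le_mul_of_nonneg_right (mod_cast hcol j hj) (hg j hj)

/-- Schur's test for a `0/1` matrix with at most `R` nonzero entries in every row and column. -/
theorem sum_filter_product_mul_le (hrow : ∀ i ∈ s, #{j ∈ t | r i j} ≤ R)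
    (hcol : ∀ j ∈ t, #{i ∈ s | r i j} ≤ R) (a : ι → ℝ) (b : κ → ℝ) :
    ∑ p ∈ s ×ˢ t with r p.1 p.2, a p.1 * b p.2 ≤
      R * (√(∑ i ∈ s, a i ^ 2) * √(∑ j ∈ t, b j ^ 2)) := by
  calc ∑ p ∈ s ×ˢ t with r p.1 p.2, a p.1 * b p.2
      ≤ √(∑ p ∈ s ×ˢ t with r p.1 p.2, a p.1 ^ 2) * √(∑ p ∈ s ×ˢ t with r p.1 p.2, b p.2 ^ 2) :=
        Real.sum_mul_le_sqrt_mul_sqrt _ _ _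
    _ ≤ √(R * ∑ i ∈ s, a i ^ 2) * √(R * ∑ j ∈ t, b j ^ 2) := by
        gcongr
        · exact sum_filter_product_fst_le s t r hrow fun i _ => sq_nonneg (a i)
        · exact sum_filter_product_snd_le s t r hcol fun j _ => sq_nonneg (b j)
    _ = R * (√(∑ i ∈ s, a i ^ 2) * √(∑ j ∈ t, b j ^ 2)) := by
        rw [Real.sqrt_mul R.cast_nonneg, Real.sqrt_mul R.cast_nonneg]
        linear_combination (√(∑ i ∈ s, a i ^ 2) * √(∑ j ∈ t, b j ^ 2)) *
          Real.mul_self_sqrt R.cast_nonneg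

theorem card_filter_le_ncard {p : κ → Prop} [DecidablePred p] (hp : {a | p a}.Finite) :
    #{a ∈ t | p a} ≤ {a | p a}.ncard := by
  rw [← Set.ncard_coe_finset]
  exact Set.ncard_le_ncard (by simp [Set.subset_def]) hp

end Finset

theorem ContinuousLinearMap.opNorm_le_of_dense_inner_le {𝕜 E F : Type*} [RCLike 𝕜]
    [NormedAddCommGroup E] [InnerProductSpace 𝕜 E] [NormedAddCommGroup F] [InnerProductSpace 𝕜 F]
    (B : E →L[𝕜] F) {s : Set E} {t : Set F} (hs : Dense s) (ht : Dense t) {M : ℝ} (hM : 0 ≤ M)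
    (h : ∀ x ∈ s, ∀ y ∈ t, ‖⟪y, B x⟫_𝕜‖ ≤ M * ‖x‖ * ‖y‖) : ‖B‖ ≤ M := by
  have hall (x : E) (y : F) : ‖⟪y, B x⟫_𝕜‖ ≤ M * ‖x‖ * ‖y‖ :=
    le_on_closure (f := fun p : E × F => ‖⟪p.2, B p.1⟫_𝕜‖) (fun p hp => h p.1 hp.1 p.2 hp.2)
      (by fun_prop) (by fun_prop) ((hs.prod ht).closure_eq ▸ Set.mem_univ (x, y))
  refine B.opNorm_le_bound hM fun x => ?_
  rw [← innerSL_apply_norm 𝕜 (B x)]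
  refine (innerSL 𝕜 (B x)).opNorm_le_bound (by positivity) fun y => ?_
  rw [innerSL_apply_apply, norm_inner_symm]
  exact hall x y

namespace OrthogonalDecomposition

variable {I I' H H' : Type*} [NormedAddCommGroup H] [InnerProductSpace ℂ H] [CompleteSpace H]
  [NormedAddCommGroup H'] [InnerProductSpace ℂ H'] [CompleteSpace H']
  {P : I → H →L[ℂ] H} {P' : I' → H' →L[ℂ] H'}

theorem inner_apply_left (hP : OrthogonalDecomposition P) (i : I) (x y : H) :
    ⟪P i x, y⟫_ℂ = ⟪x, P i y⟫_ℂ :=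
  (hP.isSelfAdjoint i).isSymmetric x y

theorem apply_apply_self (hP : OrthogonalDecomposition P) (i : I) (x : H) :
    P i (P i x) = P i x :=
  DFunLike.congr_fun (hP.idempotent i) x

theorem apply_apply_of_ne (hP : OrthogonalDecomposition P) {i j : I} (hij : i ≠ j) (x : H) :
    P i (P j x) = 0 :=
  DFunLike.congr_fun (hP.orthogonal i j hij) x

theorem orthogonalFamily (hP : OrthogonalDecomposition P) :
    OrthogonalFamily ℂ (fun i => LinearMap.range (P i : H →ₗ[ℂ] H))
      fun i => (LinearMap.range (P i : H →ₗ[ℂ] H)).subtypeₗᵢ := by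
  rintro i j hij ⟨_, x, rfl⟩ ⟨_, y, rfl⟩
  change ⟪P i x, P j y⟫_ℂ = 0
  rw [hP.inner_apply_left, hP.apply_apply_of_ne hij, inner_zero_right]

theorem norm_sum_apply_sq (hP : OrthogonalDecomposition P) (s : Finset I) (x : H) :
    ‖∑ i ∈ s, P i x‖ ^ 2 = ∑ i ∈ s, ‖P i x‖ ^ 2 :=
  hP.orthogonalFamily.norm_sum (fun i => ⟨P i x, x, rfl⟩) s

theorem exists_sum_apply_eq (hP : OrthogonalDecomposition P) {x : H}
    (hx : x ∈ ⨆ i, LinearMap.range (P i : H →ₗ[ℂ] H)) : ∃ s : Finset I, ∑ i ∈ s, P i x = x := by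
  obtain ⟨f, hf, rfl⟩ := (Submodule.mem_iSup_iff_exists_finsupp _ x).mp hx
  have hfix (i : I) : P i (f i) = f i := by
    obtain ⟨u, hu⟩ := hf i
    rw [← hu]
    exact hP.apply_apply_self i u
  have hcomp (i : I) : P i (f.sum fun _ y => y) = f i := by
    rw [Finsupp.sum, map_sum, sum_eq_single i]
    · exact hfix i
    · intro j _ hji
      obtain ⟨u, hu⟩ := hf j
      rw [← hu]
      exact hP.apply_apply_of_ne hji.symm u
    · intro hi
      rw [Finsupp.notMem_support_iff.mp hi, map_zero]
  exact ⟨f.support, by simp only [hcomp]; rfl⟩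

theorem inner_apply_eq_sum_blocks (hP : OrthogonalDecomposition P)
    (hP' : OrthogonalDecomposition P') (B : H →L[ℂ] H') {s : Finset I} {t : Finset I'} {x : H}
    {y : H'} (hx : ∑ ℓ ∈ s, P ℓ x = x) (hy : ∑ ℓ' ∈ t, P' ℓ' y = y) :
    ⟪y, B x⟫_ℂ = ∑ p ∈ s ×ˢ t, ⟪P' p.2 y, (P' p.2).comp (B.comp (P p.1)) (P p.1 x)⟫_ℂ := by
  conv_lhs => rw [← hx, ← hy]
  simp only [map_sum, sum_inner, inner_sum, sum_product]
  refine sum_congr rfl fun ℓ _ => sum_congr rfl fun ℓ' _ => ?_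
  rw [ContinuousLinearMap.comp_apply, ContinuousLinearMap.comp_apply, hP.apply_apply_self,
    ← hP'.inner_apply_left, hP'.apply_apply_self]

theorem norm_inner_apply_le_of_mem_iSup (hP : OrthogonalDecomposition P)
    (hP' : OrthogonalDecomposition P') (B : H →L[ℂ] H') (R : ℕ) {c : ℝ} (hc : 0 ≤ c)
    (hbound : ∀ (ℓ : I) (ℓ' : I'), ‖(P' ℓ').comp (B.comp (P ℓ))‖ ≤ c)
    (hrow : ∀ ℓ : I, {ℓ' : I' | (P' ℓ').comp (B.comp (P ℓ)) ≠ 0}.Finite ∧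
      {ℓ' : I' | (P' ℓ').comp (B.comp (P ℓ)) ≠ 0}.ncard ≤ R)
    (hcol : ∀ ℓ' : I', {ℓ : I | (P' ℓ').comp (B.comp (P ℓ)) ≠ 0}.Finite ∧
      {ℓ : I | (P' ℓ').comp (B.comp (P ℓ)) ≠ 0}.ncard ≤ R)
    {x : H} (hx : x ∈ ⨆ ℓ, LinearMap.range (P ℓ : H →ₗ[ℂ] H))
    {y : H'} (hy : y ∈ ⨆ ℓ', LinearMap.range (P' ℓ' : H' →ₗ[ℂ] H')) :
    ‖⟪y, B x⟫_ℂ‖ ≤ R * c * ‖x‖ * ‖y‖ := by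
  classical
  obtain ⟨s, hs⟩ := hP.exists_sum_apply_eq hx
  obtain ⟨t, ht⟩ := hP'.exists_sum_apply_eq hy
  set Q : I → I' → H →L[ℂ] H' := fun ℓ ℓ' => (P' ℓ').comp (B.comp (P ℓ))
  have hblock (p : I × I') :
      ‖⟪P' p.2 y, Q p.1 p.2 (P p.1 x)⟫_ℂ‖ ≤ c * (‖P p.1 x‖ * ‖P' p.2 y‖) :=
    calc _ ≤ ‖P' p.2 y‖ * ‖Q p.1 p.2 (P p.1 x)‖ := norm_inner_le_norm _ _
      _ ≤ ‖P' p.2 y‖ * (c * ‖P p.1 x‖) := by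
          gcongr
          exact (Q p.1 p.2).le_of_opNorm_le (hbound _ _) _
      _ = c * (‖P p.1 x‖ * ‖P' p.2 y‖) := by ring
  calc ‖⟪y, B x⟫_ℂ‖
      = ‖∑ p ∈ s ×ˢ t with Q p.1 p.2 ≠ 0, ⟪P' p.2 y, Q p.1 p.2 (P p.1 x)⟫_ℂ‖ := by
        rw [hP.inner_apply_eq_sum_blocks hP' B hs ht, sum_filter_of_ne]
        intro p _ hp hQ
        exact hp (by simp [hQ])
    _ ≤ ∑ p ∈ s ×ˢ t with Q p.1 p.2 ≠ 0, c * (‖P p.1 x‖ * ‖P' p.2 y‖) :=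
        norm_sum_le_of_le _ fun p _ => hblock p
    _ ≤ c * (R * (√(∑ ℓ ∈ s, ‖P ℓ x‖ ^ 2) * √(∑ ℓ' ∈ t, ‖P' ℓ' y‖ ^ 2))) := by
        rw [← mul_sum]
        gcongr
        exact sum_filter_product_mul_le s t (fun ℓ ℓ' => Q ℓ ℓ' ≠ 0)
          (fun ℓ _ => (card_filter_le_ncard t (hrow ℓ).1).trans (hrow ℓ).2)
          (fun ℓ' _ => (card_filter_le_ncard s (hcol ℓ').1).trans (hcol ℓ').2)
          (fun ℓ => ‖P ℓ x‖) (fun ℓ' => ‖P' ℓ' y‖)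
    _ = R * c * ‖x‖ * ‖y‖ := by
        rw [← hP.norm_sum_apply_sq, ← hP'.norm_sum_apply_sq, hs, ht,
          Real.sqrt_sq (norm_nonneg _), Real.sqrt_sq (norm_nonneg _)]
        ring

end OrthogonalDecomposition

/-- **Norm bound for block operators with uniformly finitely supported rows and columns**
(the step in the proof of Lemma 6.2 of Bunke–Engel–Land using the mutual orthogonality of the
family `(v_ℓ)`): if all blocks of `B` have norm at most `c` and every row and every column of
the block support has at most `R` elements, then `‖B‖ ≤ R·c`. -/
theorem block_operator_norm_estimate
    {L L' : Type*} {H H' : Type*}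
    [NormedAddCommGroup H] [InnerProductSpace ℂ H] [CompleteSpace H]
    [NormedAddCommGroup H'] [InnerProductSpace ℂ H'] [CompleteSpace H']
    (P : L → (H →L[ℂ] H)) (P' : L' → (H' →L[ℂ] H'))
    (hP : OrthogonalDecomposition P) (hP' : OrthogonalDecomposition P')
    (B : H →L[ℂ] H') (R : ℕ) (c : ℝ) (hc : 0 ≤ c)
    (hbound : ∀ (ℓ : L) (ℓ' : L'), ‖(P' ℓ').comp (B.comp (P ℓ))‖ ≤ c)
    (hrow : ∀ ℓ : L, {ℓ' : L' | (P' ℓ').comp (B.comp (P ℓ)) ≠ 0}.Finite ∧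
      {ℓ' : L' | (P' ℓ').comp (B.comp (P ℓ)) ≠ 0}.ncard ≤ R)
    (hcol : ∀ ℓ' : L', {ℓ : L | (P' ℓ').comp (B.comp (P ℓ)) ≠ 0}.Finite ∧
      {ℓ : L | (P' ℓ').comp (B.comp (P ℓ)) ≠ 0}.ncard ≤ R) :
    ‖B‖ ≤ (R : ℝ) * c := by
  refine B.opNorm_le_of_dense_inner_le hP.denseSpan hP'.denseSpan (by positivity) ?_
  exact fun x hx y hy => hP.norm_inner_apply_le_of_mem_iSup hP' B R hc hbound hrow hcol hx hy
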